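/- arXiv:math/0001190 — 9 statements merged into one kernel-verified Lean document; each statement's English description precedes it below -/
import Mathlib

section
/- Let a_1, ..., a_n be a symmetric sequence of positive integers with convergents P_i/Q_i of [0; a_1, ..., a_n]. Then there exists a positive integer a_0 such that Q_n divides 2*a_0*P_n + P_{n-1} if and only if the product P_{n-1} * Q_{n-1} is even. -/
open Matrix

private def Mx (x : ℤ) : Matrix (Fin 2) (Fin 2) ℤ := !![x, 1; 1, 0]

private lemma Mx_symm (x : ℤ) : (Mx x)ᵀ = Mx x := by
  ext i j; fin_cases i <;> fin_cases j <;> rfl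

/-- There exists a positive integer `a₀` with `Q n ∣ 2·a₀·P n + P (n-1)` iff
`P (n-1) · Q (n-1)` is even, for the convergents of a symmetric sequence of
positive integers. -/
theorem exists_a0_iff_even
    (n : ℕ) (hn : 1 ≤ n) (a P Q : ℕ → ℤ)
    (hapos : ∀ i, 1 ≤ i → i ≤ n → 0 < a i)
    (hsym : ∀ i, 1 ≤ i → i ≤ n → a i = a (n + 1 - i))
    (hP0 : P 0 = 0) (hP1 : P 1 = 1)
    (hQ0 : Q 0 = 1) (hQ1 : Q 1 = a 1)
    (hPrec : ∀ k, k + 2 ≤ n → P (k + 2) = a (k + 2) * P (k + 1) + P k)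
    (hQrec : ∀ k, k + 2 ≤ n → Q (k + 2) = a (k + 2) * Q (k + 1) + Q k) :
    (∃ a0 : ℤ, 0 < a0 ∧ Q n ∣ 2 * a0 * P n + P (n - 1)) ↔
      Even (P (n - 1) * Q (n - 1)) := by
  -- positivity of the Q's
  have hQpos : ∀ k, k ≤ n → 1 ≤ Q k := by
    intro k
    induction k using Nat.strong_induction_on with
    | _ k ih =>
      match k with
      | 0 => intro _; rw [hQ0]
      | 1 => intro h1; rw [hQ1]; exact hapos 1 le_rfl h1
      | (k+2) =>
        intro h
        have h1 := ih (k+1) (by omega) (by omega)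
        have h0 := ih k (by omega) (by omega)
        have ha := hapos (k+2) (by omega) h
        rw [hQrec k h]; nlinarith
  -- the determinant identity
  have hdet : ∀ k, 1 ≤ k → k ≤ n →
      P k * Q (k-1) - P (k-1) * Q k = (-1 : ℤ)^(k-1) := by
    intro k
    induction k using Nat.strong_induction_on with
    | _ k ih =>
      match k with
      | 0 => intro h; omega
      | 1 => intro _ _; simp [hP0, hP1, hQ0]
      | (k+2) =>
        intro _ h
        have ihh := ih (k+1) (by omega) (by omega) (by omega)
        have e2 : k + 1 - 1 = k := by omega
        rw [e2] at ihh
        have e1 : k + 2 - 1 = k + 1 := by omega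
        rw [e1, hPrec k h, hQrec k h, pow_succ]
        linear_combination (-1 : ℤ) * ihh
  -- the matrix product identity
  have hX : ∀ k, 1 ≤ k → k ≤ n →
      ((List.range k).map (fun i => Mx (a (i+1)))).prod
        = !![Q k, Q (k-1); P k, P (k-1)] := by
    intro k
    induction k using Nat.strong_induction_on with
    | _ k ih =>
      match k with
      | 0 => intro h; omega
      | 1 =>
        intro _ h
        have hr1 : List.range 1 = [0] := rfl
        rw [hr1, List.map_singleton, List.prod_singleton, hQ1, hP1, hQ0, hP0]
        rfl
      | (k+2) =>
        intro _ h
        have ihh := ih (k+1) (by omega) (by omega) (by omega)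
        have e2 : k + 1 - 1 = k := by omega
        rw [e2] at ihh
        rw [List.range_succ, List.map_append, List.prod_append, ihh,
          List.map_singleton, List.prod_singleton]
        show _ * Mx (a (k+2)) = _
        rw [Mx, Matrix.mul_fin_two]
        have e1 : k + 2 - 1 = k + 1 := by omega
        rw [e1, hPrec k h, hQrec k h]
        congr 1 <;> ring
  -- symmetry of the word
  have hrev : ((List.range n).map fun i => Mx (a (i+1))).reverse
      = (List.range n).map fun i => Mx (a (i+1)) := by
    apply List.ext_getElem
    · simp
    · intro i h1 h2
      have hl : i < n := by simpa using h2
      simp only [List.getElem_reverse, List.getElem_map, List.getElem_range,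
        List.length_map, List.length_range]
      have e : n - 1 - i + 1 = n + 1 - (i + 1) := by omega
      rw [e, ← hsym (i+1) (by omega) (by omega)]
  have hT := Matrix.transpose_list_prod ((List.range n).map fun i => Mx (a (i+1)))
  have hmapT : (((List.range n).map fun i => Mx (a (i+1))).map Matrix.transpose)
      = (List.range n).map fun i => Mx (a (i+1)) := by
    rw [List.map_map]
    simp [Function.comp_def, Mx_symm]
  rw [hmapT, hrev, hX n hn le_rfl] at hT
  have hsymm : P n = Q (n-1) := by
    have h10 := congrFun (congrFun hT 0) 1
    simpa using h10
  rw [← hsymm, Int.even_mul]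
  -- arithmetic setup
  have hds : P n * P n - P (n-1) * Q n = (-1 : ℤ)^(n-1) := by
    have h := hdet n hn le_rfl
    rw [← hsymm] at h
    exact h
  set s : ℤ := (-1 : ℤ)^(n-1) with hsdef
  have hss : s * s = 1 := by
    rw [hsdef, ← pow_add]
    exact Even.neg_one_pow ⟨n-1, rfl⟩
  have hsodd : Odd s := Odd.pow (by decide)
  have hQn1 : 1 ≤ Q n := hQpos n le_rfl
  constructor
  · rintro ⟨a0, _, hdvd⟩
    by_contra hodd
    rw [not_or, Int.not_even_iff_odd, Int.not_even_iff_odd] at hodd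
    obtain ⟨hq, hp⟩ := hodd
    have hE : Even (P (n-1) * Q n) := by
      have h : P (n-1) * Q n = P n * P n - s := by linarith [hds]
      rw [h]
      exact (hp.mul hp).sub_odd hsodd
    have hQeven : Even (Q n) := by
      rcases Int.even_mul.mp hE with h | h
      · exact absurd h (Int.not_even_iff_odd.mpr hq)
      · exact h
    obtain ⟨c, hc⟩ := hdvd
    have h1 : Even (2 * a0 * P n + P (n-1)) := hc ▸ hQeven.mul_right c
    have h2 : Odd (2 * a0 * P n + P (n-1)) :=
      Even.add_odd ⟨a0 * P n, by ring⟩ hq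
    exact (Int.not_even_iff_odd.mpr h2) h1
  · intro hev
    have hx : ∃ x : ℤ, Q n ∣ 2 * x * P n + P (n-1) := by
      rcases hev with ⟨m, hm⟩ | ⟨r, hr⟩
      · refine ⟨-s * m * P n, ⟨-2 * s * m * P (n-1), ?_⟩⟩
        linear_combination (-2*s*m) * hds + (-2*m) * hss + hm
      · have hpe : Even (P n) := ⟨r, hr⟩
        have hoQn : Odd (Q n) := by
          have h1 : Odd (P (n-1) * Q n) := by
            have h : P (n-1) * Q n = P n * P n - s := by linarith [hds]
            rw [h]
            exact (hpe.mul_right (P n)).sub_odd hsodd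
          exact (Int.odd_mul.mp h1).2
        obtain ⟨t, ht⟩ := hoQn
        refine ⟨-s * (t+1) * P (n-1) * P n,
          ⟨P (n-1) * (-1 - 2*s*(t+1) * P (n-1)), ?_⟩⟩
        linear_combination (-2*s*(t+1) * P (n-1)) * hds
          + (-2*(t+1) * P (n-1)) * hss + P (n-1) * ht
    obtain ⟨x, hxd⟩ := hx
    refine ⟨x + (|x| + 1) * Q n, ?_, ?_⟩
    · nlinarith [neg_abs_le x, abs_nonneg x,
        mul_nonneg (by positivity : (0:ℤ) ≤ |x| + 1) (by linarith : (0:ℤ) ≤ Q n - 1)]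
    · have h : 2 * (x + (|x| + 1) * Q n) * P n + P (n-1)
          = (2 * x * P n + P (n-1)) + Q n * (2 * (|x| + 1) * P n) := by ring
      rw [h]
      exact dvd_add hxd ⟨_, rfl⟩
end

section
/- Let a_1, ..., a_n be a symmetric sequence of positive integers with continued fraction convergents P_i/Q_i of [0; a_1, ..., a_n], and suppose n is odd and P_{n-1}Q_{n-1} is even. Let t be an integer such that a_0 := -Q_{n-1}P_{n-1}/2 + t*Q_n > 0. Then (2*a_0*P_n + P_{n-1})/Q_n = 2t*P_n - P_{n-1}^2 is an integer. -/
/-- For n odd with `P (n-1) · Q (n-1)` even, taking `a₀ = -Q (n-1)·P (n-1)/2 + t·Q n > 0`,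
one has `(2·a₀·P n + P (n-1)) / Q n = 2·t·P n - P (n-1)²`, an integer. -/
theorem a0_formula_n_odd
    (n : ℕ) (hn : 1 ≤ n) (a P Q : ℕ → ℤ)
    (hapos : ∀ i, 1 ≤ i → i ≤ n → 0 < a i)
    (hsym : ∀ i, 1 ≤ i → i ≤ n → a i = a (n + 1 - i))
    (hP0 : P 0 = 0) (hP1 : P 1 = 1)
    (hQ0 : Q 0 = 1) (hQ1 : Q 1 = a 1)
    (hPrec : ∀ k, k + 2 ≤ n → P (k + 2) = a (k + 2) * P (k + 1) + P k)
    (hQrec : ∀ k, k + 2 ≤ n → Q (k + 2) = a (k + 2) * Q (k + 1) + Q k)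
    (hno : Odd n) (heven : Even (P (n - 1) * Q (n - 1)))
    (t a0 : ℤ) (ha0def : 2 * a0 = -(Q (n - 1) * P (n - 1)) + 2 * (t * Q n))
    (ha0pos : 0 < a0) :
    2 * a0 * P n + P (n - 1) = (2 * t * P n - P (n - 1) ^ 2) * Q n := by
  have key : ∀ k, k + 1 ≤ n → P (k + 1) * Q k - P k * Q (k + 1) = (-1) ^ k := by
    intro k
    induction k with
    | zero => intro _; simp [hP0, hP1, hQ0]
    | succ m ih =>
      intro h
      have hm : m + 1 ≤ n := by omega
      have := ih hm
      rw [hPrec m h, hQrec m h]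
      ring_nf
      ring_nf at this
      linarith [this]
  obtain ⟨m, hm⟩ := hno
  have hn1 : n - 1 + 1 = n := by omega
  have hdet : P n * Q (n - 1) - P (n - 1) * Q n = 1 := by
    have := key (n - 1) (by omega)
    rw [hn1] at this
    rw [this]
    have : n - 1 = 2 * m := by omega
    rw [this]
    simp [pow_mul]
  linear_combination P n * ha0def - P (n - 1) * hdet
end

section
/- Let a_1, ..., a_n be a symmetric sequence of positive integers with continued fraction convergents P_i/Q_i of [0; a_1, ..., a_n]. If both P_{n-1} and Q_{n-1} are odd, then there is no positive integer a_0 such that Q_n divides 2*a_0*P_n + P_{n-1}. -/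
private lemma prod_eq_aux (n : ℕ) (a P Q : ℕ → ℤ)
    (hP0 : P 0 = 0) (hP1 : P 1 = 1)
    (hQ0 : Q 0 = 1) (hQ1 : Q 1 = a 1)
    (hPrec : ∀ k, k + 2 ≤ n → P (k + 2) = a (k + 2) * P (k + 1) + P k)
    (hQrec : ∀ k, k + 2 ≤ n → Q (k + 2) = a (k + 2) * Q (k + 1) + Q k) :
    ∀ m, 1 ≤ m → m ≤ n →
      ((List.range m).map (fun i => !![a (i+1), 1; 1, 0])).prod
        = !![Q m, Q (m-1); P m, P (m-1)] := by
  intro m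
  induction m with
  | zero => intro h; omega
  | succ m ih =>
    intro _ hmn
    rcases Nat.eq_zero_or_pos m with hm | hm
    · subst hm
      simp [List.range_succ, hP0, hP1, hQ0, hQ1]
    · obtain ⟨k, rfl⟩ : ∃ k, m = k + 1 := ⟨m - 1, by omega⟩
      rw [List.range_succ, List.map_append, List.prod_append,
        ih (by omega) (by omega)]
      simp only [List.map_cons, List.map_nil, List.prod_cons, List.prod_nil, mul_one]
      rw [Matrix.mul_fin_two]
      have hp := hPrec k (by omega)
      have hq := hQrec k (by omega)
      simp only [Nat.add_sub_cancel]
      rw [hp, hq]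
      ring_nf

/-- If `P (n-1)` and `Q (n-1)` are both odd then no positive integer `a₀` satisfies
`Q n ∣ 2·a₀·P n + P (n-1)`. -/
theorem no_a0_of_odd_odd
    (n : ℕ) (hn : 1 ≤ n) (a P Q : ℕ → ℤ)
    (hapos : ∀ i, 1 ≤ i → i ≤ n → 0 < a i)
    (hsym : ∀ i, 1 ≤ i → i ≤ n → a i = a (n + 1 - i))
    (hP0 : P 0 = 0) (hP1 : P 1 = 1)
    (hQ0 : Q 0 = 1) (hQ1 : Q 1 = a 1)
    (hPrec : ∀ k, k + 2 ≤ n → P (k + 2) = a (k + 2) * P (k + 1) + P k)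
    (hQrec : ∀ k, k + 2 ≤ n → Q (k + 2) = a (k + 2) * Q (k + 1) + Q k)
    (hPodd : Odd (P (n - 1))) (hQodd : Odd (Q (n - 1))) :
    ¬ ∃ a0 : ℤ, 0 < a0 ∧ Q n ∣ 2 * a0 * P n + P (n - 1) := by
  rintro ⟨a0, ha0, hdvd⟩
  set l : List (Matrix (Fin 2) (Fin 2) ℤ) :=
    (List.range n).map (fun i => !![a (i+1), 1; 1, 0]) with hl
  have hprod : l.prod = !![Q n, Q (n-1); P n, P (n-1)] :=
    prod_eq_aux n a P Q hP0 hP1 hQ0 hQ1 hPrec hQrec n hn le_rfl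
  -- the list is its own reverse (after transposing, which is identity on each entry)
  have hrev : (l.map Matrix.transpose).reverse = l := by
    have h1 : l.map Matrix.transpose = l := by
      simp only [hl, List.map_map]
      apply List.map_congr_left
      intro i _
      ext r c
      fin_cases r <;> fin_cases c <;> simp [Matrix.transpose]
    rw [h1, hl, ← List.map_reverse, List.range_eq_range', List.reverse_range',
      List.map_map, ← List.range_eq_range']
    apply List.map_congr_left
    intro i hi
    have hi' := List.mem_range.mp hi
    simp only [Function.comp_apply]
    have h2 : 0 + n - 1 - i + 1 = n + 1 - (i + 1) := by omega
    rw [h2, ← hsym (i+1) (by omega) (by omega)]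
  have hsymm : Matrix.transpose l.prod = l.prod := by
    rw [Matrix.transpose_list_prod, hrev]
  -- symmetry gives P n = Q (n-1)
  have hPnQ : P n = Q (n - 1) := by
    have := congrArg (fun M => M 1 0) hsymm
    have h' : Q (n-1) = P n := by simpa [hprod, Matrix.transpose] using this
    exact h'.symm
  -- determinant gives Q n * P (n-1) - Q (n-1) * P n = (-1)^n
  have hdet : Q n * P (n-1) - Q (n-1) * P n = (-1 : ℤ)^n := by
    have h1 : l.prod.det = (-1 : ℤ)^n := by
      rw [show l.prod.det = (l.map Matrix.det).prod from
        by simpa using map_list_prod (Matrix.detMonoidHom) l, hl, List.map_map]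
      rw [List.prod_eq_pow_card _ (-1 : ℤ) ?_, List.length_map, List.length_range]
      intro x hx
      obtain ⟨i, _, rfl⟩ := List.mem_map.mp hx
      simp [Matrix.det_fin_two_of]
    rw [hprod] at h1
    rw [Matrix.det_fin_two_of] at h1
    linarith [h1]
  -- parity: Q n is even
  have hQeven : Even (Q n) := by
    have h2 : Q n * P (n-1) = (-1:ℤ)^n + Q (n-1) * Q (n-1) := by
      rw [← hPnQ] at *
      linarith [hdet, hPnQ]
    have hodd2 : Odd (Q (n-1) * Q (n-1)) := hQodd.mul hQodd
    have hpow : Odd ((-1:ℤ)^n) := (Int.odd_pow' (by omega)).mpr (by decide)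
    have : Even (Q n * P (n-1)) := by
      rw [h2]; exact hpow.add_odd hodd2
    rcases Int.even_or_odd (Q n) with h | h
    · exact h
    · exact absurd this (Int.not_even_iff_odd.mpr (h.mul hPodd))
  -- contradiction: an even number divides an odd number
  have h2dvd : (2:ℤ) ∣ 2 * a0 * P n + P (n - 1) :=
    dvd_trans hQeven.two_dvd hdvd
  obtain ⟨c, hc⟩ : (2:ℤ) ∣ P (n-1) := (dvd_add_right ⟨a0 * P n, by ring⟩).mp h2dvd
  obtain ⟨k, hk⟩ := hPodd
  omega
end

section
/- Let a_1, ..., a_n be a symmetric sequence of positive integers with continued fraction convergents P_i/Q_i of [0; a_1, ..., a_n], and let a_0 be a positive integer such that m := (2*a_0*P_n + P_{n-1})/Q_n is a positive integer. Then, setting D := a_0^2 + m and X := a_0*Q_n + P_n, Y := Q_n, one has X^2 - D*Y^2 = (-1)^{n-1}. -/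
/-!
The convergents are read off the product `Mₙ = ∏ᵢ [[aᵢ, 1], [1, 0]] = [[Qₙ, Qₙ₋₁], [Pₙ, Pₙ₋₁]]`.
Transposing reverses the product, so a palindromic `a` makes `Mₙ` symmetric, i.e. `Pₙ = Qₙ₋₁`,
and `det Mₙ = (-1)ⁿ`. Expanding with `m Qₙ = 2 a₀ Pₙ + Pₙ₋₁` gives
`X² - D Y² = Pₙ² - Qₙ Pₙ₋₁ = Qₙ₋₁ Pₙ - Qₙ Pₙ₋₁ = (-1)ⁿ⁻¹`.
-/

open Matrix

theorem List.Palindrome.map_range {α : Type*} {f : ℕ → α} {n : ℕ}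
    (h : ∀ i < n, f i = f (n - 1 - i)) : ((List.range n).map f).Palindrome :=
  .of_reverse_eq <| List.ext_getElem (by simp) fun i _ hi => by
    simp only [List.length_map, List.length_range] at hi
    simp only [List.getElem_reverse, List.getElem_map, List.getElem_range, List.length_map,
      List.length_range]
    rw [h i hi]

section ContinuantMatrix

variable {R : Type*} [CommRing R]

def cfMatrix (x : R) : Matrix (Fin 2) (Fin 2) R := !![x, 1; 1, 0]

theorem cfMatrix_transpose (x : R) : (cfMatrix x)ᵀ = cfMatrix x := by
  ext i j
  fin_cases i <;> fin_cases j <;> rfl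

theorem det_cfMatrix (x : R) : (cfMatrix x).det = -1 := by
  simp [cfMatrix, det_fin_two_of]

theorem transpose_prod_map_cfMatrix (l : List R) :
    (l.map cfMatrix).prodᵀ = (l.reverse.map cfMatrix).prod := by
  rw [transpose_list_prod, List.map_map, List.map_reverse]
  simp only [Function.comp_def, cfMatrix_transpose]

theorem det_prod_map_cfMatrix (l : List R) : (l.map cfMatrix).prod.det = (-1) ^ l.length := by
  rw [← coe_detMonoidHom, map_list_prod, List.map_map]
  simp [Function.comp_def, det_cfMatrix]

theorem List.Palindrome.isSymm_prod_map_cfMatrix {l : List R} (hl : l.Palindrome) :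
    (l.map cfMatrix).prod.IsSymm := by
  rw [IsSymm, transpose_prod_map_cfMatrix, hl.reverse_eq]

theorem prod_map_cfMatrix_eq_of_recurrence {a P Q : ℕ → R} {n : ℕ}
    (hP0 : P 0 = 0) (hP1 : P 1 = 1) (hQ0 : Q 0 = 1) (hQ1 : Q 1 = a 1)
    (hPrec : ∀ k, k + 2 ≤ n → P (k + 2) = a (k + 2) * P (k + 1) + P k)
    (hQrec : ∀ k, k + 2 ≤ n → Q (k + 2) = a (k + 2) * Q (k + 1) + Q k)
    {k : ℕ} (hk : 1 ≤ k) (hkn : k ≤ n) :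
    (((List.range k).map fun i => a (i + 1)).map cfMatrix).prod
      = !![Q k, Q (k - 1); P k, P (k - 1)] := by
  induction k, hk using Nat.le_induction with
  | base => simp [cfMatrix, hP0, hP1, hQ0, hQ1]
  | succ k hk ih =>
    obtain ⟨j, rfl⟩ : ∃ j, k = j + 1 := ⟨k - 1, by omega⟩
    rw [List.range_succ, List.map_append, List.map_append, List.prod_append, ih (by omega),
      hPrec j hkn, hQrec j hkn]
    simp [cfMatrix, mul_comm]

end ContinuantMatrix

theorem pell_solution_general
    (n : ℕ) (hn : 1 ≤ n) (a P Q : ℕ → ℤ)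
    (hsym : ∀ i, 1 ≤ i → i ≤ n → a i = a (n + 1 - i))
    (hP0 : P 0 = 0) (hP1 : P 1 = 1)
    (hQ0 : Q 0 = 1) (hQ1 : Q 1 = a 1)
    (hPrec : ∀ k, k + 2 ≤ n → P (k + 2) = a (k + 2) * P (k + 1) + P k)
    (hQrec : ∀ k, k + 2 ≤ n → Q (k + 2) = a (k + 2) * Q (k + 1) + Q k)
    (a0 m : ℤ)
    (hmdef : m * Q n = 2 * a0 * P n + P (n - 1)) :
    (a0 * Q n + P n) ^ 2 - (a0 ^ 2 + m) * (Q n) ^ 2 = (-1 : ℤ) ^ (n - 1) := by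
  have hl : ((List.range n).map fun i => a (i + 1)).Palindrome :=
    .map_range fun i hi => by
      rw [hsym (i + 1) (by omega) (by omega)]
      congr 1
      omega
  have hM := prod_map_cfMatrix_eq_of_recurrence hP0 hP1 hQ0 hQ1 hPrec hQrec hn le_rfl
  have hPQ : P n = Q (n - 1) := by
    have := hl.isSymm_prod_map_cfMatrix.apply 0 1
    rw [hM] at this
    simpa using this
  have hdet : Q n * P (n - 1) - Q (n - 1) * P n = (-1) ^ n := by
    have := det_prod_map_cfMatrix ((List.range n).map fun i => a (i + 1))
    rw [hM, det_fin_two_of] at this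
    simpa using this
  obtain ⟨k, rfl⟩ := Nat.exists_eq_add_of_le' hn
  simp only [Nat.add_sub_cancel] at *
  linear_combination -Q (k + 1) * hmdef - hdet + P (k + 1) * hPQ

/-- With `m = (2·a₀·P n + P (n-1)) / Q n` a positive integer and `D = a₀² + m`,
the pair `X = a₀·Q n + P n`, `Y = Q n` satisfies `X² - D·Y² = (-1)^(n-1)`. -/
theorem pell_solution
    (n : ℕ) (hn : 1 ≤ n) (a P Q : ℕ → ℤ)
    (hapos : ∀ i, 1 ≤ i → i ≤ n → 0 < a i)
    (hsym : ∀ i, 1 ≤ i → i ≤ n → a i = a (n + 1 - i))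
    (hP0 : P 0 = 0) (hP1 : P 1 = 1)
    (hQ0 : Q 0 = 1) (hQ1 : Q 1 = a 1)
    (hPrec : ∀ k, k + 2 ≤ n → P (k + 2) = a (k + 2) * P (k + 1) + P k)
    (hQrec : ∀ k, k + 2 ≤ n → Q (k + 2) = a (k + 2) * Q (k + 1) + Q k)
    (a0 m : ℤ) (ha0 : 0 < a0) (hm : 0 < m)
    (hmdef : m * Q n = 2 * a0 * P n + P (n - 1)) :
    (a0 * Q n + P n) ^ 2 - (a0 ^ 2 + m) * (Q n) ^ 2 = (-1 : ℤ) ^ (n - 1) :=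
  pell_solution_general n hn a P Q hsym hP0 hP1 hQ0 hQ1 hPrec hQrec a0 m hmdef
end

section
/- Let a_1, ..., a_n be a symmetric sequence of positive integers with continued fraction convergents P_i/Q_i of [0; a_1, ..., a_n], with P_{n-1}Q_{n-1} even, n even, and let t be a positive integer. Define D(t) := (Q_{n-1}P_{n-1}/2 + t*Q_n)^2 + 2t*P_n + P_{n-1}^2. Then with C := (Q_{n-1}P_{n-1}/2 + t*Q_n)*Q_n + P_n and H := Q_n, one has C^2 - D(t)*H^2 = -1. -/
open Matrix

lemma cf_matrix_prod (n : ℕ) (a P Q : ℕ → ℤ)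
    (hP0 : P 0 = 0) (hP1 : P 1 = 1)
    (hQ0 : Q 0 = 1) (hQ1 : Q 1 = a 1)
    (hPrec : ∀ k, k + 2 ≤ n → P (k + 2) = a (k + 2) * P (k + 1) + P k)
    (hQrec : ∀ k, k + 2 ≤ n → Q (k + 2) = a (k + 2) * Q (k + 1) + Q k) :
    ∀ k, 1 ≤ k → k ≤ n →
      ((List.range k).map (fun i => !![a (i+1), 1; 1, 0])).prod
        = !![Q k, Q (k-1); P k, P (k-1)] := by
  intro k
  induction k with
  | zero => omega
  | succ k ih =>
    intro _ hkn
    rcases Nat.eq_or_lt_of_le (Nat.one_le_iff_ne_zero.mpr (Nat.succ_ne_zero k)) with h1 | h1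
    · have hk0 : k = 0 := by omega
      subst hk0
      simp [show List.range 1 = [0] from rfl, hP0, hP1, hQ0, hQ1]
    · have hk1 : 1 ≤ k := by omega
      rw [List.range_succ, List.map_append, List.prod_append,
        ih hk1 (by omega)]
      have hP := hPrec (k-1) (by omega)
      have hQ := hQrec (k-1) (by omega)
      have e1 : k - 1 + 2 = k + 1 := by omega
      have e2 : k - 1 + 1 = k := by omega
      rw [e1, e2] at hP hQ
      simp only [List.map_cons, List.map_nil, List.prod_cons, List.prod_nil,
        mul_one, Matrix.mul_fin_two, Nat.add_sub_cancel]
      rw [hP, hQ]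
      ext r c
      fin_cases r <;> fin_cases c <;> simp <;> ring

/-- For n even, with `a₀ = Q (n-1)·P (n-1)/2 + t·Q n` (t a positive integer),
`D = a₀² + 2·t·P n + P (n-1)²`, `C = a₀·Q n + P n` and `H = Q n` satisfy
`C² - D·H² = -1`. -/
theorem pell_neg_one_n_even
    (n : ℕ) (hn : 1 ≤ n) (a P Q : ℕ → ℤ)
    (hapos : ∀ i, 1 ≤ i → i ≤ n → 0 < a i)
    (hsym : ∀ i, 1 ≤ i → i ≤ n → a i = a (n + 1 - i))
    (hP0 : P 0 = 0) (hP1 : P 1 = 1)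
    (hQ0 : Q 0 = 1) (hQ1 : Q 1 = a 1)
    (hPrec : ∀ k, k + 2 ≤ n → P (k + 2) = a (k + 2) * P (k + 1) + P k)
    (hQrec : ∀ k, k + 2 ≤ n → Q (k + 2) = a (k + 2) * Q (k + 1) + Q k)
    (hne : Even n) (heven : Even (P (n - 1) * Q (n - 1)))
    (t a0 : ℤ) (ht : 0 < t)
    (ha0def : 2 * a0 = Q (n - 1) * P (n - 1) + 2 * (t * Q n)) :
    (a0 * Q n + P n) ^ 2 -
      (a0 ^ 2 + 2 * t * P n + P (n - 1) ^ 2) * (Q n) ^ 2 = -1 := by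
  set L : List (Matrix (Fin 2) (Fin 2) ℤ) :=
    (List.range n).map (fun i => !![a (i+1), 1; 1, 0]) with hL
  have hprod : L.prod = !![Q n, Q (n-1); P n, P (n-1)] :=
    cf_matrix_prod n a P Q hP0 hP1 hQ0 hQ1 hPrec hQrec n hn le_rfl
  -- reverse of L equals L by symmetry
  have hrev : L.reverse = L := by
    apply List.ext_getElem
    · simp
    · intro i h1 h2
      simp only [hL, List.length_map, List.length_range] at h2
      rw [List.getElem_reverse]
      simp only [hL, List.getElem_map, List.getElem_range, List.length_map,
        List.length_range]
      have := hsym (i+1) (by omega) (by omega)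
      have e : n + 1 - (i+1) = n - 1 - i + 1 := by omega
      rw [e] at this
      rw [← this]
  have htr : (L.prod)ᵀ = L.prod := by
    rw [Matrix.transpose_list_prod]
    have : L.map Matrix.transpose = L := by
      simp only [hL, List.map_map]
      apply List.map_congr_left
      intro i _
      show (!![a (i+1), 1; 1, 0])ᵀ = _
      ext r c
      fin_cases r <;> fin_cases c <;> simp
    rw [this, hrev]
  have hsymm : P n = Q (n - 1) := by
    have := htr
    rw [hprod] at this
    have h01 := congrFun (congrFun this 1) 0
    exact (by simpa using h01 : Q (n-1) = P n).symm
  -- determinant identity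
  have hdet : ∀ k, k + 1 ≤ n → P (k+1) * Q k - P k * Q (k+1) = (-1)^k := by
    intro k
    induction k with
    | zero => intro _; simp [hP0, hP1, hQ0]
    | succ k ih =>
      intro hk
      have hP := hPrec k (by omega)
      have hQ := hQrec k (by omega)
      have := ih (by omega)
      rw [hP, hQ]
      rw [pow_succ]
      linear_combination (-1 : ℤ) * this
  have hd : P n * Q (n-1) - P (n-1) * Q n = -1 := by
    have := hdet (n-1) (by omega)
    have e : n - 1 + 1 = n := by omega
    rw [e] at this
    rw [this]
    have : (-1 : ℤ)^(n-1) = -1 := by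
      apply Odd.neg_one_pow
      rcases hne with ⟨m, hm⟩
      exact ⟨m - 1, by omega⟩
    rw [this]
  have hx : P n ^ 2 = P (n-1) * Q n - 1 := by
    have := hd
    rw [← hsymm] at this
    nlinarith [this]
  rw [← hsymm] at ha0def
  linear_combination (Q n * P n) * ha0def + (P (n-1) * Q n + 1) * hx
end

section
/- Let a_1, ..., a_n be a symmetric sequence of positive integers with convergents P_i/Q_i of [0; a_1, ..., a_n], and suppose a_0 is a positive integer and k an integer with 2*a_0*P_n + P_{n-1} = k*Q_n. Then 2*a_0 = (-1)^{n-1}(-P_{n-1}Q_{n-1} + Q_n*(k*Q_{n-1} - 2*a_0*P_{n-1})); in particular, 2*a_0 ≡ (-1)^n * P_{n-1}Q_{n-1} (mod Q_n). -/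
/-- If `2·a₀·P n + P (n-1) = k·Q n` for a positive integer `a₀`, then
`2·a₀ = (-1)^(n-1)·(-P (n-1)·Q (n-1) + Q n·(k·Q (n-1) - 2·a₀·P (n-1)))`;
in particular `2·a₀ ≡ (-1)^n · P (n-1)·Q (n-1) (mod Q n)`. -/
theorem a0_characterization
    (n : ℕ) (hn : 1 ≤ n) (a P Q : ℕ → ℤ)
    (hapos : ∀ i, 1 ≤ i → i ≤ n → 0 < a i)
    (hsym : ∀ i, 1 ≤ i → i ≤ n → a i = a (n + 1 - i))
    (hP0 : P 0 = 0) (hP1 : P 1 = 1)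
    (hQ0 : Q 0 = 1) (hQ1 : Q 1 = a 1)
    (hPrec : ∀ k, k + 2 ≤ n → P (k + 2) = a (k + 2) * P (k + 1) + P k)
    (hQrec : ∀ k, k + 2 ≤ n → Q (k + 2) = a (k + 2) * Q (k + 1) + Q k)
    (a0 k : ℤ) (ha0 : 0 < a0)
    (hk : 2 * a0 * P n + P (n - 1) = k * Q n) :
    2 * a0 = (-1 : ℤ) ^ (n - 1) *
        (-(P (n - 1) * Q (n - 1)) + Q n * (k * Q (n - 1) - 2 * a0 * P (n - 1))) ∧
      Q n ∣ 2 * a0 - (-1 : ℤ) ^ n * (P (n - 1) * Q (n - 1)) := by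
  -- determinant identity
  have hdet : ∀ m, 1 ≤ m → m ≤ n →
      P m * Q (m - 1) - P (m - 1) * Q m = (-1 : ℤ) ^ (m - 1) := by
    intro m
    induction m with
    | zero => omega
    | succ j ih =>
      intro _ hjn
      match j, ih with
      | 0, _ => simp [hP0, hP1, hQ0, hQ1]
      | i + 1, ih =>
        have h1 : P (i + 2) = a (i + 2) * P (i + 1) + P i := hPrec i (by omega)
        have h2 : Q (i + 2) = a (i + 2) * Q (i + 1) + Q i := hQrec i (by omega)
        have h3 := ih (by omega) (by omega)
        simp only [Nat.add_sub_cancel] at h3 ⊢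
        have : P (i + 2) * Q (i + 1) - P (i + 1) * Q (i + 2)
            = -(P (i + 1) * Q i - P i * Q (i + 1)) := by
          rw [h1, h2]; ring
        rw [this, h3, pow_succ]
        ring
  have hD := hdet n hn le_rfl
  obtain ⟨m, rfl⟩ : ∃ m, n = m + 1 := ⟨n - 1, by omega⟩
  simp only [Nat.add_sub_cancel] at hD hk ⊢
  have he : ((-1 : ℤ) ^ m) * ((-1 : ℤ) ^ m) = 1 := by
    rw [← pow_add]
    exact Even.neg_one_pow ⟨m, rfl⟩
  constructor
  · linear_combination ((-1 : ℤ) ^ m * Q m) * hk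
      - (2 * a0 * (-1 : ℤ) ^ m) * hD - (2 * a0) * he
  · have hne : (-1 : ℤ) ^ (m + 1) = -(-1 : ℤ) ^ m := by rw [pow_succ]; ring
    refine ⟨(-1 : ℤ) ^ m * (k * Q m - 2 * a0 * P m), ?_⟩
    rw [hne]
    linear_combination ((-1 : ℤ) ^ m * Q m) * hk
      - (2 * a0 * (-1 : ℤ) ^ m) * hD - (2 * a0) * he
end

section
/- Let a_1, ..., a_n be a symmetric sequence of positive integers with convergents P_i/Q_i of [0; a_1, ..., a_n]. If n is even, P_{n-1} is even and Q_{n-1} is odd, then P_{n-1} ≡ 2 (mod 4) and Q_n is odd. -/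
open Matrix in


/-- For `n` even, if `Q (n-1)` is odd and `P (n-1)` is even then
`P (n-1) ≡ 2 (mod 4)` and `Q n` is odd. -/
theorem Pnm1_two_mod_four
    (n : ℕ) (hn : 1 ≤ n) (a P Q : ℕ → ℤ)
    (hapos : ∀ i, 1 ≤ i → i ≤ n → 0 < a i)
    (hsym : ∀ i, 1 ≤ i → i ≤ n → a i = a (n + 1 - i))
    (hP0 : P 0 = 0) (hP1 : P 1 = 1)
    (hQ0 : Q 0 = 1) (hQ1 : Q 1 = a 1)
    (hPrec : ∀ k, k + 2 ≤ n → P (k + 2) = a (k + 2) * P (k + 1) + P k)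
    (hQrec : ∀ k, k + 2 ≤ n → Q (k + 2) = a (k + 2) * Q (k + 1) + Q k)
    (hne : Even n) (hQodd : Odd (Q (n - 1))) (hPeven : Even (P (n - 1))) :
    P (n - 1) % 4 = 2 ∧ Odd (Q n) := by
  have hn2 : 2 ≤ n := by
    rcases hne with ⟨l, hl⟩; omega
  -- the matrices
  set g : ℕ → Matrix (Fin 2) (Fin 2) ℤ := fun i => !![a (i + 1), 1; 1, 0] with hg
  -- product formula
  have hprod : ∀ k, 1 ≤ k → k ≤ n →
      ((List.range k).map g).prod = !![Q k, Q (k - 1); P k, P (k - 1)] := by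
    intro k hk
    induction k, hk using Nat.le_induction with
    | base =>
      intro _
      rw [show List.range 1 = [0] from rfl]
      simp [hg, hQ1, hQ0, hP1, hP0]
    | succ k hk ih =>
      intro hkn
      rw [List.range_succ, List.map_append, List.prod_append, ih (by omega)]
      simp only [List.map_cons, List.map_nil, List.prod_cons, List.prod_nil, mul_one, hg]
      rw [Matrix.mul_fin_two]
      have hq := hQrec (k - 1) (by omega)
      have hp := hPrec (k - 1) (by omega)
      rw [show k - 1 + 2 = k + 1 by omega, show k - 1 + 1 = k by omega] at hq hp
      congr 1 <;> simp only [show k + 1 - 1 = k from rfl] <;> [skip] <;> skip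
      ext i j
      fin_cases i <;> fin_cases j <;>
        simp [hq, hp, show k + 1 - 1 = k from rfl] <;> ring
  -- symmetry of the product
  have hrev : (List.map g (List.range n)).reverse = List.map g (List.range n) := by
    apply List.ext_getElem
    · simp
    · intro i hi1 hi2
      simp only [List.length_map, List.length_range] at hi1 hi2
      simp only [List.getElem_reverse, List.getElem_map, List.getElem_range,
        List.length_map, List.length_range]
      have hs := hsym (i + 1) (by omega) (by omega)
      rw [show n + 1 - (i + 1) = n - i by omega] at hs
      rw [hg]
      simp only
      rw [show n - 1 - i + 1 = n - i by omega, ← hs]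
  have htr : List.map Matrix.transpose (List.map g (List.range n)) =
      List.map g (List.range n) := by
    apply List.ext_getElem
    · simp
    · intro i hi1 hi2
      simp only [List.getElem_map, List.getElem_range]
      ext x y
      fin_cases x <;> fin_cases y <;> simp [hg, Matrix.transpose_apply]
  have hsymm : ((List.map g (List.range n)).prod)ᵀ = (List.map g (List.range n)).prod := by
    rw [Matrix.transpose_list_prod, htr, hrev]
  -- P n = Q (n - 1)
  have hPn : P n = Q (n - 1) := by
    have hFn := hprod n (by omega) le_rfl
    rw [hFn] at hsymm
    have := congrFun (congrFun hsymm 1) 0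
    simpa [Matrix.transpose] using this.symm
  -- determinant identity
  have hdet : ∀ k, k + 1 ≤ n → P (k + 1) * Q k - P k * Q (k + 1) = (-1 : ℤ) ^ k := by
    intro k
    induction k with
    | zero => intro _; simp [hP0, hP1, hQ0]
    | succ k ih =>
      intro hk
      have hq := hQrec k (by omega)
      have hp := hPrec k (by omega)
      have ih' := ih (by omega)
      rw [hp, hq, pow_succ]
      linear_combination (-1 : ℤ) * ih'
  have hkey : P n * Q (n - 1) - P (n - 1) * Q n = -1 := by
    have h := hdet (n - 1) (by omega)
    rw [show n - 1 + 1 = n by omega] at h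
    rw [h]
    have : Odd (n - 1) := by
      rw [Nat.odd_iff]
      rw [Nat.even_iff] at hne
      omega
    exact this.neg_one_pow
  rw [hPn] at hkey
  -- parity bookkeeping
  obtain ⟨p, hp⟩ := hPeven
  obtain ⟨m, hm⟩ := hQodd
  have h2 : 2 * (p * Q n) = 2 * (2 * (m ^ 2 + m) + 1) := by
    rw [hm] at hkey
    rw [hp] at hkey
    ring_nf
    ring_nf at hkey
    linarith
  have h3 : p * Q n = 2 * (m ^ 2 + m) + 1 := by
    have := mul_left_cancel₀ (two_ne_zero (α := ℤ)) h2
    exact this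
  have hodd : Odd (p * Q n) := ⟨m ^ 2 + m, by linarith⟩
  rw [Int.odd_mul] at hodd
  obtain ⟨hpodd, hQnodd⟩ := hodd
  refine ⟨?_, hQnodd⟩
  obtain ⟨t, ht⟩ := hpodd
  rw [hp, ht]
  omega
end

section
/- Define g(c) = 4325 + 28140c + 83652c^2 + 147440c^3 + 168000c^4 + 126528c^5 + 61504c^6 + 17664c^7 + 2304c^8 and a_0(c) = 65 + 214c + 288c^2 + 184c^3 + 48c^4. Then for all integers c ≥ 1, a_0(c)^2 < g(c) < (a_0(c)+1)^2; in particular g(c) is not a perfect square and floor(sqrt(g(c))) = a_0(c) for c ≥ 1. -/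
/-- For integers `c ≥ 1`, `a₀(c)² < g(c) < (a₀(c)+1)²`; in particular `g(c)` is not a
perfect square and `⌊√(g(c))⌋ = a₀(c)`. -/
theorem g_between_squares (c : ℤ) (hc : 1 ≤ c) :
    (65 + 214 * c + 288 * c ^ 2 + 184 * c ^ 3 + 48 * c ^ 4) ^ 2 <
        4325 + 28140 * c + 83652 * c ^ 2 + 147440 * c ^ 3 + 168000 * c ^ 4 +
          126528 * c ^ 5 + 61504 * c ^ 6 + 17664 * c ^ 7 + 2304 * c ^ 8 ∧
      4325 + 28140 * c + 83652 * c ^ 2 + 147440 * c ^ 3 + 168000 * c ^ 4 +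
          126528 * c ^ 5 + 61504 * c ^ 6 + 17664 * c ^ 7 + 2304 * c ^ 8 <
        (65 + 214 * c + 288 * c ^ 2 + 184 * c ^ 3 + 48 * c ^ 4 + 1) ^ 2 ∧
      ¬ IsSquare (4325 + 28140 * c + 83652 * c ^ 2 + 147440 * c ^ 3 + 168000 * c ^ 4 +
          126528 * c ^ 5 + 61504 * c ^ 6 + 17664 * c ^ 7 + 2304 * c ^ 8) ∧
      Int.sqrt (4325 + 28140 * c + 83652 * c ^ 2 + 147440 * c ^ 3 + 168000 * c ^ 4 +
          126528 * c ^ 5 + 61504 * c ^ 6 + 17664 * c ^ 7 + 2304 * c ^ 8) =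
        65 + 214 * c + 288 * c ^ 2 + 184 * c ^ 3 + 48 * c ^ 4 := by
  set a : ℤ := 65 + 214 * c + 288 * c ^ 2 + 184 * c ^ 3 + 48 * c ^ 4 with ha
  set g : ℤ := 4325 + 28140 * c + 83652 * c ^ 2 + 147440 * c ^ 3 + 168000 * c ^ 4 +
      126528 * c ^ 5 + 61504 * c ^ 6 + 17664 * c ^ 7 + 2304 * c ^ 8 with hg
  have h1 : a ^ 2 < g := by nlinarith [sq_nonneg c, sq_nonneg (c - 1), pow_pos (lt_of_lt_of_le zero_lt_one hc) 2, pow_pos (lt_of_lt_of_le zero_lt_one hc) 3, pow_pos (lt_of_lt_of_le zero_lt_one hc) 4]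
  have h2 : g < (a + 1) ^ 2 := by nlinarith [sq_nonneg c, sq_nonneg (c - 1), pow_pos (lt_of_lt_of_le zero_lt_one hc) 2, pow_pos (lt_of_lt_of_le zero_lt_one hc) 3, pow_pos (lt_of_lt_of_le zero_lt_one hc) 4]
  have ha0 : 0 ≤ a := by positivity
  have hg0 : 0 ≤ g := le_trans (sq_nonneg a) h1.le
  -- work in ℕ
  obtain ⟨n, hn⟩ := Int.eq_ofNat_of_zero_le hg0
  obtain ⟨m, hm⟩ := Int.eq_ofNat_of_zero_le ha0
  have hsq : Int.sqrt g = a := by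
    rw [hn, hm, Int.sqrt_natCast, Nat.cast_inj]
    have h1' : m * m ≤ n := by
      have := h1.le; rw [hn, hm, sq] at this; exact_mod_cast this
    have h2' : n < (m + 1) * (m + 1) := by
      have := h2; rw [hn, hm, sq] at this; exact_mod_cast this
    exact le_antisymm (Nat.lt_succ_iff.mp (Nat.sqrt_lt.mpr h2')) (Nat.le_sqrt.mpr h1')
  refine ⟨h1, h2, ?_, hsq⟩
  rintro ⟨r, hr⟩
  have hgr : g = (r.natAbs : ℤ) ^ 2 := by
    rw [hr, sq, ← Int.natAbs_mul_self']
  have h1n : a < (r.natAbs : ℤ) := by nlinarith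
  have h2n : (r.natAbs : ℤ) < a + 1 := by nlinarith
  omega
end

section
/- Let a_1, ..., a_n be a symmetric sequence of positive integers with convergents P_i/Q_i of [0; a_1, ..., a_n], let a_0 be a positive integer with m := (2*a_0*P_n + P_{n-1})/Q_n a positive integer, and set D := a_0^2 + m. Then sqrt(D) = [a_0; overline{a_1, ..., a_n, 2a_0}]; i.e., the real quadratic irrational sqrt(D) has purely periodic continued fraction tail a_1, ..., a_n, 2a_0 after the initial term a_0. -/
open Matrix


lemma PQ_symm (n : ℕ) (hn : 1 ≤ n) (a P Q : ℕ → ℤ)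
    (hsym : ∀ i, 1 ≤ i → i ≤ n → a i = a (n + 1 - i))
    (hP0 : P 0 = 0) (hP1 : P 1 = 1)
    (hQ0 : Q 0 = 1) (hQ1 : Q 1 = a 1)
    (hPrec : ∀ k, k + 2 ≤ n → P (k + 2) = a (k + 2) * P (k + 1) + P k)
    (hQrec : ∀ k, k + 2 ≤ n → Q (k + 2) = a (k + 2) * Q (k + 1) + Q k) :
    P n = Q (n - 1) := by
  classical
  set M : ℤ → Matrix (Fin 2) (Fin 2) ℤ := fun x => !![x, 1; 1, 0] with hM
  have key : ∀ k, 1 ≤ k → k ≤ n → ((List.range k).map (fun i => M (a (i+1)))).prod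
      = !![Q k, Q (k-1); P k, P (k-1)] := by
    intro k
    induction k with
    | zero => omega
    | succ j ih =>
      intro _ hk
      rcases Nat.eq_zero_or_pos j with rfl | hj
      · simp [hM, List.range_succ, hQ1, hQ0, hP1, hP0]
      · obtain ⟨i, rfl⟩ : ∃ i, j = i + 1 := ⟨j - 1, by omega⟩
        rw [List.range_succ, List.map_append, List.prod_append,
          ih (by omega) (by omega)]
        simp only [List.map_cons, List.map_nil, List.prod_cons, List.prod_nil, mul_one, hM]
        rw [hQrec i hk, hPrec i hk]
        ext r c
        fin_cases r <;> fin_cases c <;>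
          simp [Matrix.mul_apply, Fin.sum_univ_two] <;> ring
  have htr : ∀ x : ℤ, (M x)ᵀ = M x := by
    intro x; ext r c; fin_cases r <;> fin_cases c <;> simp [hM]
  have hrev : ((List.range n).map (fun i => M (a (i+1)))).reverse
      = (List.range n).map (fun i => M (a (i+1))) := by
    apply List.ext_getElem
    · simp
    · intro j h1 h2
      simp only [List.length_reverse, List.length_map, List.length_range] at h1 h2
      simp only [List.getElem_reverse, List.getElem_map, List.getElem_range,
        List.length_map, List.length_range]
      rw [show n - 1 - j + 1 = n + 1 - (j + 1) from by omega,
        ← hsym (j+1) (by omega) (by omega)]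
  have hsymmM : (((List.range n).map (fun i => M (a (i+1)))).prod)ᵀ
      = ((List.range n).map (fun i => M (a (i+1)))).prod := by
    rw [Matrix.transpose_list_prod]
    rw [show ((List.range n).map (fun i => M (a (i+1)))).map Matrix.transpose
        = (List.range n).map (fun i => M (a (i+1))) by
      rw [List.map_map]; exact List.map_congr_left (fun i _ => htr _)]
    rw [hrev]
  rw [key n hn le_rfl] at hsymmM
  have := congrFun (congrFun hsymmM 1) 0
  simpa using this.symm

lemma floor_fract_helper (x w : ℝ) (A : ℤ) (hw : 1 < w) (hx : x = A + w⁻¹) :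
    ⌊x⌋ = A ∧ Int.fract x = w⁻¹ := by
  have hw0 : 0 < w := lt_trans one_pos hw
  have h1 : 0 < w⁻¹ := inv_pos.mpr hw0
  have h2 : w⁻¹ < 1 := by rw [inv_lt_one_iff₀]; right; exact hw
  have hfl : ⌊x⌋ = A := by
    rw [Int.floor_eq_iff]
    constructor
    · rw [hx]; linarith
    · rw [hx]; push_cast; linarith
  refine ⟨hfl, ?_⟩
  rw [← Int.self_sub_floor, hfl, hx]; ring

open GenContFract in
/-- With `m = (2·a₀·P n + P (n-1)) / Q n` a positive integer and `D = a₀² + m`, the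
continued fraction of `√D` is `[a₀; a 1, ..., a n, 2a₀]` with purely periodic tail of
period `n + 1`. -/
theorem sqrt_D_periodic_expansion
    (n : ℕ) (hn : 1 ≤ n) (a P Q : ℕ → ℤ)
    (hapos : ∀ i, 1 ≤ i → i ≤ n → 0 < a i)
    (hsym : ∀ i, 1 ≤ i → i ≤ n → a i = a (n + 1 - i))
    (hP0 : P 0 = 0) (hP1 : P 1 = 1)
    (hQ0 : Q 0 = 1) (hQ1 : Q 1 = a 1)
    (hPrec : ∀ k, k + 2 ≤ n → P (k + 2) = a (k + 2) * P (k + 1) + P k)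
    (hQrec : ∀ k, k + 2 ≤ n → Q (k + 2) = a (k + 2) * Q (k + 1) + Q k)
    (a0 m : ℤ) (ha0 : 0 < a0) (hm : 0 < m)
    (hmdef : m * Q n = 2 * a0 * P n + P (n - 1)) :
    (GenContFract.of (Real.sqrt ((a0 : ℝ) ^ 2 + (m : ℝ)))).h = (a0 : ℝ) ∧
      ∀ k : ℕ,
        (GenContFract.of (Real.sqrt ((a0 : ℝ) ^ 2 + (m : ℝ)))).partDens.get? k =
          some (if k % (n + 1) = n then ((2 * a0 : ℤ) : ℝ)
            else ((a (k % (n + 1) + 1) : ℤ) : ℝ)) := by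
  have hPQ : P n = Q (n - 1) := PQ_symm n hn a P Q hsym hP0 hP1 hQ0 hQ1 hPrec hQrec
  -- positivity of convergents
  have hQpos : ∀ k, k ≤ n → (1:ℤ) ≤ Q k := by
    intro k
    induction k using Nat.strong_induction_on with
    | _ k ih =>
      intro hk
      match k with
      | 0 => rw [hQ0]
      | 1 => rw [hQ1]; exact hapos 1 le_rfl hk
      | (j+2) =>
        rw [hQrec j hk]
        have h1 := ih (j+1) (by omega) (by omega)
        have h2 := ih j (by omega) (by omega)
        have h3 := hapos (j+2) (by omega) hk
        nlinarith
  have hPnonneg : ∀ k, k ≤ n → (0:ℤ) ≤ P k := by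
    intro k
    induction k using Nat.strong_induction_on with
    | _ k ih =>
      intro hk
      match k with
      | 0 => rw [hP0]
      | 1 => rw [hP1]; norm_num
      | (j+2) =>
        rw [hPrec j hk]
        have h1 := ih (j+1) (by omega) (by omega)
        have h2 := ih j (by omega) (by omega)
        have h3 := hapos (j+2) (by omega) hk
        nlinarith
  set s : ℝ := Real.sqrt ((a0 : ℝ) ^ 2 + (m : ℝ)) with hsdef
  have hDpos : (0:ℝ) < (a0 : ℝ) ^ 2 + (m : ℝ) := by positivity
  have hs2 : s ^ 2 = (a0 : ℝ) ^ 2 + (m : ℝ) := Real.sq_sqrt hDpos.le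
  have hspos : 0 < s := Real.sqrt_pos.mpr hDpos
  -- the complete quotient chain, defined backwards
  set z : ℕ → ℝ := fun j => Nat.rec (s + a0) (fun j zj => (a (n - j) : ℝ) + zj⁻¹) j with hzdef
  have hz0 : z 0 = s + a0 := rfl
  have hzs : ∀ j, z (j+1) = (a (n - j):ℝ) + (z j)⁻¹ := fun j => rfl
  have hz1 : ∀ j, j ≤ n → 1 < z j := by
    intro j
    induction j with
    | zero =>
      intro _
      rw [hz0]
      have : (1:ℝ) ≤ a0 := by exact_mod_cast ha0
      linarith
    | succ j ih =>
      intro hj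
      have h1 := ih (by omega)
      have h2 : (1:ℝ) ≤ (a (n - j) : ℝ) := by
        exact_mod_cast hapos (n-j) (by omega) (by omega)
      have h3 : (0:ℝ) < (z j)⁻¹ := inv_pos.mpr (by linarith)
      rw [hzs]; linarith
  set y : ℕ → ℝ := fun k => z (n + 1 - k) with hydef
  have hyn1 : y (n+1) = s + a0 := by simp [hydef, hz0]
  have hy : ∀ k, 1 ≤ k → k ≤ n → y k = (a k : ℝ) + (y (k+1))⁻¹ := by
    intro k h1 h2
    show z (n + 1 - k) = (a k : ℝ) + (z (n + 1 - (k+1)))⁻¹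
    rw [show n + 1 - k = (n - k) + 1 from by omega, hzs,
      show n - (n - k) = k from by omega, show n + 1 - (k+1) = n - k from by omega]
  have hygt1 : ∀ k, 1 ≤ k → k ≤ n + 1 → 1 < y k := fun k h1 h2 => hz1 _ (by omega)
  
  have hyne : ∀ k, 1 ≤ k → k ≤ n + 1 → y k ≠ 0 := fun k h1 h2 => by
    have := hygt1 k h1 h2; linarith
  have E : ∀ j, j ≤ n - 1 →
      y (j+2) * Q (j+1) + Q j = y 1 * (y (j+2) * P (j+1) + P j) := by
    intro j
    induction j with
    | zero =>
      intro _
      rw [hQ1, hQ0, hP1, hP0]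
      have h1 := hy 1 le_rfl hn
      have h2 : y 2 ≠ 0 := hyne 2 (by omega) (by omega)
      rw [h1]
      push_cast
      field_simp
      ring
    | succ j ih =>
      intro hj
      have hIH := ih (by omega)
      have hrel := hy (j+2) (by omega) (by omega)
      have hw : y (j+3) ≠ 0 := hyne (j+3) (by omega) (by omega)
      have hwpos : 0 < y (j+3) := lt_trans one_pos (hygt1 (j+3) (by omega) (by omega))
      rw [hrel] at hIH
      rw [show j+1+2 = j+3 from rfl, show j+1+1 = j+2 from rfl,
        hQrec j (by omega), hPrec j (by omega)]
      rw [show j+2+1 = j+3 from rfl] at hIH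
      push_cast
      push_cast at hIH
      field_simp at hIH
      linear_combination hIH
  have hEn := E (n-1) le_rfl
  rw [show n-1+2 = n+1 from by omega, show n-1+1 = n from by omega] at hEn
  have hQn1 : (1:ℝ) ≤ (Q (n-1) : ℝ) := by exact_mod_cast hQpos (n-1) (by omega)
  have hQn : (1:ℝ) ≤ (Q n : ℝ) := by exact_mod_cast hQpos n le_rfl
  have hPn1 : (0:ℝ) ≤ (P (n-1) : ℝ) := by exact_mod_cast hPnonneg (n-1) (by omega)
  have hPQr : (P n : ℝ) = (Q (n-1) : ℝ) := by exact_mod_cast hPQ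
  have hmr : (m:ℝ) * Q n = 2*a0*P n + P (n-1) := by exact_mod_cast hmdef
  have hyn1gt : 1 < y (n+1) := hygt1 (n+1) (by omega) le_rfl
  have hkey : (s - a0) * (y (n+1) * Q n + Q (n-1)) = y (n+1) * P n + P (n-1) := by
    rw [hyn1]
    linear_combination (Q n : ℝ) * hs2 + hmr - (s - (a0:ℝ)) * hPQr
  have hyPpos : 0 < y (n+1) * P n + P (n-1) := by nlinarith
  have hclose : (s - a0) * y 1 = 1 := by
    have h3 : ((s - a0) * y 1 - 1) * (y (n+1) * P n + P (n-1)) = 0 := by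
      linear_combination hkey - (s - (a0:ℝ)) * hEn
    rcases mul_eq_zero.mp h3 with h | h
    · linarith
    · exact absurd h (ne_of_gt hyPpos)
  have hy1gt : 1 < y 1 := hygt1 1 le_rfl (by omega)
  have hy1pos : 0 < y 1 := lt_trans one_pos hy1gt
  have hsval : s = (a0:ℝ) + (y 1)⁻¹ := by
    have h : s - (a0:ℝ) = (y 1)⁻¹ := by
      field_simp
      linear_combination hclose
    linarith
  have hfs := floor_fract_helper s (y 1) a0 hy1gt hsval
  have hfy : ∀ k, 1 ≤ k → k ≤ n → ⌊y k⌋ = a k ∧ Int.fract (y k) = (y (k+1))⁻¹ :=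
    fun k h1 h2 =>
      floor_fract_helper _ _ _ (hygt1 (k+1) (by omega) (by omega)) (hy k h1 h2)
  have hfyn : ⌊y (n+1)⌋ = 2*a0 ∧ Int.fract (y (n+1)) = (y 1)⁻¹ := by
    apply floor_fract_helper _ _ _ hy1gt
    rw [hyn1, hsval]; push_cast; ring
  have hmod : ∀ j : ℕ, (j+1) % (n+1) = if j % (n+1) = n then 0 else j % (n+1) + 1 := by
    intro j
    have h1 : (j+1) % (n+1) = (j % (n+1) + 1 % (n+1)) % (n+1) := Nat.add_mod j 1 (n+1)
    have h2 : 1 % (n+1) = 1 := Nat.mod_eq_of_lt (by omega)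
    have hb : j % (n+1) < n + 1 := Nat.mod_lt _ (by omega)
    rw [h1, h2]
    split
    · next h => rw [h]; simp
    · next h => exact Nat.mod_eq_of_lt (by omega)
  set c : ℕ → ℝ := fun j => Nat.rec s (fun _ cj => (Int.fract cj)⁻¹) j with hcdef
  have hc0 : c 0 = s := rfl
  have hcs : ∀ j, c (j+1) = (Int.fract (c j))⁻¹ := fun j => rfl
  have hcy : ∀ j, c (j+1) = y (j % (n+1) + 1) := by
    intro j
    induction j with
    | zero => rw [hcs, hc0, hfs.2, inv_inv, Nat.zero_mod]
    | succ j ih =>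
      have hb : j % (n+1) < n + 1 := Nat.mod_lt _ (by omega)
      rw [hcs (j+1), ih]
      by_cases hr : j % (n+1) = n
      · rw [hr, hfyn.2, inv_inv, hmod j, if_pos hr]
      · rw [(hfy (j % (n+1) + 1) (by omega) (by omega)).2, inv_inv, hmod j, if_neg hr]
  have hfract : ∀ j, Int.fract (c j) = (y (j % (n+1) + 1))⁻¹ := by
    intro j
    match j with
    | 0 => rw [hc0, hfs.2, Nat.zero_mod]
    | (i+1) =>
      have hb : i % (n+1) < n + 1 := Nat.mod_lt _ (by omega)
      rw [hcy i]
      by_cases hr : i % (n+1) = n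
      · rw [hr, hfyn.2]
        rw [show (i+1) % (n+1) = 0 from by rw [hmod i, if_pos hr]]
      · rw [(hfy (i % (n+1) + 1) (by omega) (by omega)).2,
          show (i+1) % (n+1) = i % (n+1) + 1 from by rw [hmod i, if_neg hr]]
  have hfract_ne : ∀ j, Int.fract (c j) ≠ 0 := by
    intro j
    rw [hfract j]
    have hb : j % (n+1) < n + 1 := Nat.mod_lt _ (by omega)
    have h1 : 1 < y (j % (n+1) + 1) := hygt1 _ (by omega) (by omega)
    exact (inv_pos.mpr (by linarith)).ne'
  have hof : ∀ j i, (GenContFract.of (c i)).s.get? j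
      = (GenContFract.of (c (i + j))).s.get? 0 := by
    intro j
    induction j with
    | zero => intro i; rfl
    | succ j ih =>
      intro i
      rw [GenContFract.of_s_succ, ← hcs i, ih (i+1),
        show i + (j+1) = i + 1 + j from by omega]
  constructor
  · rw [GenContFract.of_h_eq_floor, hfs.1]
  · intro k
    have h1 : (GenContFract.of s).s.get? k
        = some ⟨1, (⌊(Int.fract (c k))⁻¹⌋ : ℤ)⟩ := by
      have h2 := hof k 0
      rw [show (0:ℕ) + k = k from by omega] at h2
      rw [show (GenContFract.of s) = GenContFract.of (c 0) from rfl, h2]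
      exact GenContFract.of_s_head (hfract_ne k)
    rw [GenContFract.partDen_eq_s_b h1]
    congr 1
    rw [hfract k, inv_inv]
    have hb : k % (n+1) < n + 1 := Nat.mod_lt _ (by omega)
    by_cases hr : k % (n+1) = n
    · rw [if_pos hr, hr]
      show ((⌊y (n+1)⌋ : ℤ) : ℝ) = ((2*a0 : ℤ) : ℝ)
      exact congrArg (fun z : ℤ => (z : ℝ)) hfyn.1
    · rw [if_neg hr]
      show ((⌊y (k % (n+1) + 1)⌋ : ℤ) : ℝ) = ((a (k % (n+1) + 1) : ℤ) : ℝ)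
      exact congrArg (fun z : ℤ => (z : ℝ))
        (hfy (k % (n+1) + 1) (by omega) (by omega)).1
end
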